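/- Let A be a free finitely generated abelian group with a (not necessarily symmetric) unimodular bilinear pairing ⟨·,·⟩ : A ⊗ A → ℤ, and let A = F⁰A ⊇ F¹A ⊇ … ⊇ F^d A ⊇ F^{d+1}A = 0 be a decreasing filtration by subgroups such that ⟨F^iA, F^jA⟩ = 0 for all i,j ≥ 0 with i+j ≥ d+1, and such that rk(F^iA/F^{i+1}A) = rk(F^{d-i}A/F^{d-i+1}A) for each 0 ≤ i ≤ d. Suppose the filtration splits, i.e. each quotient A/F^iA is torsion-free. Then for each 0 ≤ i ≤ d, the induced pairing (F^iA/F^{i+1}A) ⊗ (F^{d-i}A/F^{d-i+1}A) → ℤ, sending [x]⊗[y] to ⟨x,y⟩, is well-defined and unimodular. -/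

import Mathlib

/-!
When `A ⧸ N` is free, `N` is a direct summand of `A`, so every functional on `N` extends to `A`
and, `B` being unimodular, is `B x` restricted to `N`; thus the left orthogonal of `N` has rank
`rk A - rk N`. The rank symmetry of the graded pieces gives `rk Fʲ + rk F^{d+1-j} = rk A`, so the
saturated subgroup `F^{d+1-j}`, which is orthogonal to `Fʲ`, is the whole left orthogonal of `Fʲ`.
Injectivity and surjectivity of the pairing on `grⁱ × gr^{d-i}` are then the identities
`(F^{d-i})^⊥ = F^{i+1}` and `(F^{d-i+1})^⊥ = Fⁱ`.
-/

open Module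

namespace Submodule

variable {R M : Type*} [CommRing R] [AddCommGroup M] [Module R M]

theorem exists_comp_subtype_eq_id_of_projective (N : Submodule R M) [Projective R (M ⧸ N)] :
    ∃ π : M →ₗ[R] N, π ∘ₗ N.subtype = LinearMap.id := by
  obtain ⟨s, hs⟩ := N.mkQ.exists_rightInverse_of_surjective N.range_mkQ
  have := (LinearMap.exact_subtype_mkQ N).split_tfae N.injective_subtype N.mkQ_surjective
  exact (this.out 0 1 rfl rfl).mp ⟨s, hs⟩

theorem dualMap_subtype_surjective (N : Submodule R M) [Projective R (M ⧸ N)] :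
    Function.Surjective N.subtype.dualMap := by
  obtain ⟨π, hπ⟩ := N.exists_comp_subtype_eq_id_of_projective
  exact fun f ↦ ⟨f ∘ₗ π, by rw [LinearMap.dualMap_apply', LinearMap.comp_assoc, hπ,
    LinearMap.comp_id]⟩

end Submodule

namespace LinearMap

variable {R M N : Type*} [CommRing R] [AddCommGroup M] [Module R M] [AddCommGroup N] [Module R N]

theorem domRestrict₂_surjective {B : M →ₗ[R] N →ₗ[R] R} (hB : Function.Surjective B)
    (L : Submodule R N) [Projective R (N ⧸ L)] : Function.Surjective (B.domRestrict₂ L) :=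
  L.dualMap_subtype_surjective.comp hB

theorem exists_mem_ker_domRestrict₂_eq {B : M →ₗ[R] N →ₗ[R] R} (hB : Function.Surjective B)
    {L L' : Submodule R N} [Projective R (N ⧸ L)] (h : L' ≤ L) (f : Dual R L)
    (hf : L'.comap L.subtype ≤ ker f) : ∃ x ∈ ker (B.domRestrict₂ L'), B.domRestrict₂ L x = f := by
  obtain ⟨g, rfl⟩ := L.dualMap_subtype_surjective f
  obtain ⟨x, rfl⟩ := hB g
  exact ⟨x, ext fun y ↦ hf (show ⟨y, h y.2⟩ ∈ L'.comap L.subtype from y.2), rfl⟩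

theorem liftQ₂_injective {B : M →ₗ[R] N →ₗ[R] R} {K : Submodule R M} {L : Submodule R N}
    (hK : K ≤ ker B) (hL : L ≤ ker B.flip) (h : ker B ≤ K) :
    Function.Injective (B.liftQ₂ K L hK hL) := by
  rw [← ker_eq_bot, Submodule.eq_bot_iff]
  rintro ⟨x⟩ hx
  refine (Submodule.Quotient.mk_eq_zero K).mpr (h (ext fun y ↦ ?_))
  exact congr($hx (Submodule.Quotient.mk y))

theorem liftQ₂_surjective {B : M →ₗ[R] N →ₗ[R] R} {K : Submodule R M} {L : Submodule R N}
    (hK : K ≤ ker B) (hL : L ≤ ker B.flip)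
    (h : ∀ f : Dual R N, L ≤ ker f → ∃ x, B x = f) :
    Function.Surjective (B.liftQ₂ K L hK hL) := by
  intro g
  obtain ⟨x, hx⟩ := h (g ∘ₗ L.mkQ) (fun y hy ↦ by simp [(Submodule.Quotient.mk_eq_zero L).mpr hy])
  exact ⟨Submodule.Quotient.mk x, Submodule.linearMap_qext _ (ext fun y ↦ congr($hx y))⟩

end LinearMap

section Filtration

variable {R M : Type*} [CommRing R] [AddCommGroup M] [Module R M]

abbrev gr (F : ℕ → Submodule R M) (i : ℕ) : Type _ :=
  ↥(F i) ⧸ (F (i + 1)).comap (F i).subtype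

end Filtration

section PID

variable {R M : Type*} [CommRing R] [IsDomain R] [IsPrincipalIdealRing R]
  [AddCommGroup M] [Module R M] [Module.Finite R M]

theorem Submodule.eq_of_le_of_finrank_le_of_isTorsionFree {N N' : Submodule R M}
    [IsTorsionFree R (M ⧸ N)] (h : N ≤ N') (hr : finrank R N' ≤ finrank R N) : N = N' := by
  refine le_antisymm h fun x hx ↦ ?_
  have hrank := (N.comap N'.subtype).finrank_quotient_add_finrank
  rw [(Submodule.comapSubtypeEquivOfLe h).finrank_eq] at hrank
  have hquot : finrank R (N' ⧸ N.comap N'.subtype) = 0 := by omega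
  obtain ⟨a, ha, hax⟩ := Module.finrank_eq_zero_iff.mp hquot (Submodule.Quotient.mk ⟨x, hx⟩)
  rw [← Submodule.Quotient.mk_smul, Submodule.Quotient.mk_eq_zero] at hax
  rw [← Submodule.Quotient.mk_eq_zero, ← smul_right_inj ha, smul_zero, ← Submodule.Quotient.mk_smul,
    Submodule.Quotient.mk_eq_zero]
  exact hax

theorem finrank_gr_add_finrank_succ {F : ℕ → Submodule R M} {i : ℕ} (h : F (i + 1) ≤ F i) :
    finrank R (gr F i) + finrank R (F (i + 1)) = finrank R (F i) := by
  rw [← (Submodule.comapSubtypeEquivOfLe h).finrank_eq, Submodule.finrank_quotient_add_finrank]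

theorem finrank_add_finrank_of_finrank_gr_symm {F : ℕ → Submodule R M} {d : ℕ}
    (hF0 : F 0 = ⊤) (hFd : F (d + 1) = ⊥) (hdec : ∀ i, F (i + 1) ≤ F i)
    (hrk : ∀ i ≤ d, finrank R (gr F i) = finrank R (gr F (d - i))) :
    ∀ j ≤ d + 1, finrank R (F j) + finrank R (F (d + 1 - j)) = finrank R M
  | 0, _ => by rw [hF0, Nat.sub_zero, hFd, finrank_top, finrank_bot, add_zero]
  | n + 1, hn => by
    have ih := finrank_add_finrank_of_finrank_gr_symm hF0 hFd hdec hrk n (by omega)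
    have hn' := finrank_gr_add_finrank_succ (hdec n)
    have hdn := finrank_gr_add_finrank_succ (hdec (d - n))
    rw [show d + 1 - n = d - n + 1 by omega] at ih
    rw [show d + 1 - (n + 1) = d - n by omega]
    have := hrk n (by omega)
    omega

variable [Module.Free R M]

theorem LinearMap.finrank_ker_domRestrict₂_add_finrank {B : M →ₗ[R] M →ₗ[R] R}
    (hB : Function.Surjective B) (N : Submodule R M) [IsTorsionFree R (M ⧸ N)] :
    finrank R (ker (B.domRestrict₂ N)) + finrank R N = finrank R M := by
  rw [← (quotKerEquivOfSurjective _ (domRestrict₂_surjective hB N)).finrank_eq.trans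
    (finrank_linearMap_self R R N), add_comm, Submodule.finrank_quotient_add_finrank]

theorem LinearMap.ker_domRestrict₂_eq_of_finrank_add_finrank {B : M →ₗ[R] M →ₗ[R] R}
    (hB : Function.Surjective B) {N N' : Submodule R M} [IsTorsionFree R (M ⧸ N)]
    [IsTorsionFree R (M ⧸ N')] (horth : ∀ x ∈ N', ∀ y ∈ N, B x y = 0)
    (hr : finrank R N + finrank R N' = finrank R M) : ker (B.domRestrict₂ N) = N' := by
  have hle : N' ≤ ker (B.domRestrict₂ N) := fun x hx ↦ ext fun y ↦ horth x hx y y.2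
  have := finrank_ker_domRestrict₂_add_finrank hB N
  exact (Submodule.eq_of_le_of_finrank_le_of_isTorsionFree hle (by omega)).symm

end PID

/-- If `A` is a free finitely generated abelian group with a (not necessarily
symmetric) unimodular bilinear pairing `B`, and `F` is a decreasing filtration with `F 0 = A`,
`F (d+1) = 0`, orthogonal in the sense `⟨F i, F j⟩ = 0` for `i + j ≥ d + 1`, with symmetric
ranks of adjoint quotients, that splits, then for each `i ≤ d` the induced pairing
`grⁱ ⊗ gr^{d-i} → ℤ` is well-defined and unimodular. -/
theorem stmt_1
    (A : Type) [AddCommGroup A] [Module.Free ℤ A] [Module.Finite ℤ A]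
    (B : A →ₗ[ℤ] A →ₗ[ℤ] ℤ)
    (hB : Function.Bijective B)
    (d : ℕ) (F : ℕ → Submodule ℤ A)
    (hF0 : F 0 = ⊤)
    (hFtop : ∀ k, d + 1 ≤ k → F k = ⊥)
    (hdec : ∀ i, F (i + 1) ≤ F i)
    (horth : ∀ i j : ℕ, d + 1 ≤ i + j → ∀ x ∈ F i, ∀ y ∈ F j, B x y = 0)
    (hrk : ∀ i ≤ d,
      Module.finrank ℤ (↥(F i) ⧸ (F (i + 1)).comap (F i).subtype) =
        Module.finrank ℤ (↥(F (d - i)) ⧸ (F (d - i + 1)).comap (F (d - i)).subtype))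
    (hsplit : ∀ i ≤ d, NoZeroSMulDivisors ℤ (A ⧸ F i)) :
    ∀ i ≤ d, ∃ P : (↥(F i) ⧸ (F (i + 1)).comap (F i).subtype) →ₗ[ℤ]
        (↥(F (d - i)) ⧸ (F (d - i + 1)).comap (F (d - i)).subtype) →ₗ[ℤ] ℤ,
      (∀ (x : F i) (y : F (d - i)),
        P (Submodule.Quotient.mk x) (Submodule.Quotient.mk y) = B (x : A) (y : A)) ∧
      Function.Bijective P := by
  have htf : ∀ j, IsTorsionFree ℤ (A ⧸ F j) := fun j ↦ by
    rcases le_or_gt j d with hj | hj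
    · have := hsplit j hj
      infer_instance
    · exact (Submodule.quotEquivOfEqBot _ (hFtop j hj)).injective.moduleIsTorsionFree _
        (map_smul _)
  have hsum := finrank_add_finrank_of_finrank_gr_symm hF0 (hFtop _ le_rfl) hdec hrk
  have hperp : ∀ j ≤ d + 1, LinearMap.ker (B.domRestrict₂ (F j)) = F (d + 1 - j) :=
    fun j hj ↦ LinearMap.ker_domRestrict₂_eq_of_finrank_add_finrank hB.2
      (horth _ _ (by omega)) (hsum j hj)
  intro i hi
  set Q := B.domRestrict₁₂ (F i) (F (d - i))
  have hK : (F (i + 1)).comap (F i).subtype ≤ LinearMap.ker Q :=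
    fun x hx ↦ LinearMap.ext fun y ↦ horth (i + 1) (d - i) (by omega) x hx y y.2
  have hL : (F (d - i + 1)).comap (F (d - i)).subtype ≤ LinearMap.ker Q.flip :=
    fun y hy ↦ LinearMap.ext fun x ↦ horth i (d - i + 1) (by omega) x x.2 y hy
  refine ⟨Q.liftQ₂ _ _ hK hL, fun _ _ ↦ rfl, LinearMap.liftQ₂_injective hK hL ?_,
    LinearMap.liftQ₂_surjective hK hL ?_⟩
  · intro x (hx : (x : A) ∈ LinearMap.ker (B.domRestrict₂ (F (d - i))))
    rwa [hperp _ (by omega), show d + 1 - (d - i) = i + 1 by omega] at hx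
  · intro f hf
    obtain ⟨x, hx, rfl⟩ := LinearMap.exists_mem_ker_domRestrict₂_eq hB.2 (hdec (d - i)) f hf
    rw [hperp _ (by omega), show d + 1 - (d - i + 1) = i by omega] at hx
    exact ⟨⟨x, hx⟩, rfl⟩
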